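/- If Ψ is a locally small and sound class of weights (over Set), then its saturation Ψ* — the class of all weights φ : Eᵒᵖ ⥤ Set that lie in Ψ(E) — is again locally small and sound. -/

import Mathlib

/-!
A weighted colimit `colim_ψ H` is the conical colimit of `H` over the elements of `ψ`, so it is
the Yoneda extension `Lan_y H` evaluated at `ψ`. Since `Lan_y H` is cocontinuous, induction on
`ψ ∈ Ψ(S)` shows that `Ψ(D)` is closed under `ψ`-weighted colimits for all such `ψ`; hence
`Ψ*(D) = Ψ(D)` and `Ψ*` is locally small.

By density `Ψ ⊆ Ψ*`, so a weight `φ` satisfying the representable condition for `Ψ*` is `Ψ`-flat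
by soundness of `Ψ`. The weights `ψ` whose limits `Colim_φ` preserves contain the representables
(limits weighted by `y d` are evaluations at `d`), are closed under isomorphism, and, `φ` being
`Ψ`-flat, are closed under `Ψ`-weighted colimits, because
`lim_{colim_γ K} G ≅ lim_γ (j ↦ lim_{K j} G)`. So they contain every `Ψ(D)`.
-/
open CategoryTheory CategoryTheory.Limits Opposite
namespace Paper
abbrev elCat {E : Type} [SmallCategory E] (φ : Eᵒᵖ ⥤ Type) : Type :=
  (Functor.Elements φ)ᵒᵖ
def elProj {E : Type} [SmallCategory E] (φ : Eᵒᵖ ⥤ Type) : elCat φ ⥤ E :=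
  (CategoryOfElements.π φ).leftOp
noncomputable def wColim {E : Type} [SmallCategory E] (φ : Eᵒᵖ ⥤ Type) :
    (E ⥤ Type) ⥤ Type :=
  (Functor.whiskeringLeft (elCat φ) E Type).obj (elProj φ) ⋙ colim
def wLim {D E : Type} [SmallCategory D] [SmallCategory E]
    (ψ : Dᵒᵖ ⥤ Type) (G : Dᵒᵖ ⥤ E ⥤ Type) : E ⥤ Type :=
  G.flip ⋙ coyoneda.obj (op ψ)
def wLimEval {D E : Type} [SmallCategory D] [SmallCategory E]
    (ψ : Dᵒᵖ ⥤ Type) (G : Dᵒᵖ ⥤ E ⥤ Type) (d : Dᵒᵖ) (y : ψ.obj d) :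
    wLim ψ G ⟶ G.obj d where
  app _ := TypeCat.ofHom fun α => α.app d y
  naturality _ _ _ := rfl
def wLimComparison {D E : Type} [SmallCategory D] [SmallCategory E]
    (H : (E ⥤ Type) ⥤ Type) (ψ : Dᵒᵖ ⥤ Type) (G : Dᵒᵖ ⥤ E ⥤ Type) :
    H.obj (wLim ψ G) → (ψ ⟶ G ⋙ H) := fun z =>
  { app := fun d => TypeCat.ofHom fun y => H.map (wLimEval ψ G d y) z
    naturality := fun d d' g => by
      ext y
      have h : wLimEval ψ G d' (ψ.map g y) = wLimEval ψ G d y ≫ G.map g := by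
        ext e α
        exact ConcreteCategory.congr_hom (α.naturality g) y
      change H.map (wLimEval ψ G d' (ψ.map g y)) z = H.map (G.map g) (H.map (wLimEval ψ G d y) z)
      rw [h, H.map_comp]
      rfl }
structure Weight : Type 1 where
  D : Type
  [instD : SmallCategory D]
  w : Dᵒᵖ ⥤ Type
attribute [instance] Weight.instD
abbrev WeightClass : Type 1 := Weight → Prop
def IsFlat (Ψ : WeightClass) {E : Type} [SmallCategory E] (φ : Eᵒᵖ ⥤ Type) : Prop :=
  ∀ W : Weight, Ψ W → ∀ G : W.Dᵒᵖ ⥤ E ⥤ Type,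
    Function.Bijective (wLimComparison (wColim φ) W.w G)
def IsSound (Ψ : WeightClass) : Prop :=
  ∀ (E : Type) [SmallCategory E] (φ : Eᵒᵖ ⥤ Type),
    (∀ W : Weight, Ψ W → ∀ T : W.D ⥤ E,
      Function.Bijective (wLimComparison (wColim φ) W.w (T.op ⋙ coyoneda))) →
    IsFlat Ψ φ

/-- Given a weighted cone `p : ψ ⟶ T(L, G −)` on a diagram `G : Dᵒᵖ ⥤ T` with
vertex `L`, and a functor `φ : T ⥤ Set`, the induced map `φ(L) → Nat(ψ, φ ∘ G)`. -/
def wConeMap {D T : Type} [SmallCategory D] [SmallCategory T]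
    (ψ : Dᵒᵖ ⥤ Type) (G : Dᵒᵖ ⥤ T) (L : T)
    (p : ψ ⟶ G ⋙ coyoneda.obj (op L)) (φ : T ⥤ Type) (z : φ.obj L) :
    ψ ⟶ G ⋙ φ where
  app d := TypeCat.ofHom fun y => φ.map (p.app d y) z
  naturality d d' g := by
    ext y
    have h := ConcreteCategory.congr_hom (p.naturality g) y
    dsimp at h ⊢
    rw [h, φ.map_comp]
    rfl

/-- `p : ψ ⟶ T(L, G −)` exhibits `L` as the `ψ`-weighted limit of `G`:
the induced maps `T(X, L) → Nat(ψ, T(X, G −))` are bijections. -/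
def IsWLimCone {D T : Type} [SmallCategory D] [SmallCategory T]
    (ψ : Dᵒᵖ ⥤ Type) (G : Dᵒᵖ ⥤ T) (L : T)
    (p : ψ ⟶ G ⋙ coyoneda.obj (op L)) : Prop :=
  ∀ X : T, Function.Bijective (wConeMap ψ G L p (coyoneda.obj (op X)))

/-- A `Ψ`-theory: a small category with `ψ`-weighted limits for all `ψ` in `Ψ`. -/
def IsPsiTheory (Ψ : WeightClass) (T : Type) [SmallCategory T] : Prop :=
  ∀ W : Weight, Ψ W → ∀ G : W.Dᵒᵖ ⥤ T,
    ∃ (L : T) (p : W.w ⟶ G ⋙ coyoneda.obj (op L)), IsWLimCone W.w G L p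

/-- A functor `φ : T ⥤ Set` preserves `Ψ`-limits. -/
def PreservesPsiLimits (Ψ : WeightClass) {T : Type} [SmallCategory T]
    (φ : T ⥤ Type) : Prop :=
  ∀ W : Weight, Ψ W → ∀ (G : W.Dᵒᵖ ⥤ T) (L : T)
    (p : W.w ⟶ G ⋙ coyoneda.obj (op L)), IsWLimCone W.w G L p →
    Function.Bijective (wConeMap W.w G L p φ)

/-- The pointwise `γ`-weighted colimit of a diagram `H : J ⥤ [T, Set]`:
`(Colim_γ H)(t) = Colim_γ (j ↦ H(j)(t))`. -/
noncomputable def pointwiseWColim {J T : Type} [SmallCategory J] [SmallCategory T]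
    (γ : Jᵒᵖ ⥤ Type) (H : J ⥤ T ⥤ Type) : T ⥤ Type :=
  H.flip ⋙ wColim γ

/-- `Ψ⁺(Tᵒᵖ)`: the smallest replete full subcategory of `[T, Set]` containing the
representables and closed under `γ`-weighted colimits for all `Ψ`-flat weights `γ`. -/
inductive PsiPlusClosure (Ψ : WeightClass) (T : Type) [SmallCategory T] :
    (T ⥤ Type) → Prop
  | rep (t : T) : PsiPlusClosure Ψ T (coyoneda.obj (op t))
  | iso {F G : T ⥤ Type} : PsiPlusClosure Ψ T F → Nonempty (F ≅ G) →
      PsiPlusClosure Ψ T G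
  | wcolim (W : Weight) (hW : IsFlat Ψ W.w) (H : W.D ⥤ T ⥤ Type)
      (hH : ∀ j : W.D, PsiPlusClosure Ψ T (H.obj j)) :
      PsiPlusClosure Ψ T (pointwiseWColim W.w H)

/-- `Ψ(D)`: the free `Ψ`-cocompletion of `D` inside `[Dᵒᵖ, Set]`, i.e. the smallest
replete full subcategory containing the representables and closed under `ψ`-weighted
colimits for `ψ` in `Ψ`. -/
inductive PsiCocompletion (Ψ : WeightClass) (D : Type) [SmallCategory D] :
    (Dᵒᵖ ⥤ Type) → Prop
  | rep (d : D) : PsiCocompletion Ψ D (yoneda.obj d)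
  | iso {F G : Dᵒᵖ ⥤ Type} : PsiCocompletion Ψ D F → Nonempty (F ≅ G) →
      PsiCocompletion Ψ D G
  | wcolim (W : Weight) (hW : Ψ W) (H : W.D ⥤ Dᵒᵖ ⥤ Type)
      (hH : ∀ j : W.D, PsiCocompletion Ψ D (H.obj j)) :
      PsiCocompletion Ψ D (pointwiseWColim W.w H)

/-- `Ψ` is locally small: each `Ψ(D)` is essentially small. -/
def IsLocallySmall (Ψ : WeightClass) : Prop :=
  ∀ (D : Type) [SmallCategory D], ∃ (ι : Type) (f : ι → (Dᵒᵖ ⥤ Type)),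
    ∀ F : Dᵒᵖ ⥤ Type, PsiCocompletion Ψ D F → ∃ i : ι, Nonempty (F ≅ f i)

/-- `Ψ` is saturated: the objects of `Ψ(D)` are, up to isomorphism, exactly the
weights `Dᵒᵖ ⥤ Set` belonging to `Ψ`. -/
def IsSaturated (Ψ : WeightClass) : Prop :=
  ∀ (D : Type) [SmallCategory D] (F : Dᵒᵖ ⥤ Type),
    PsiCocompletion Ψ D F ↔ ∃ G : Dᵒᵖ ⥤ Type, Ψ (Weight.mk D G) ∧ Nonempty (F ≅ G)

/-- The closure of `Ψ(D)` in `[Dᵒᵖ, Set]` under `γ`-weighted colimits for all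
`Ψ`-flat weights `γ`. -/
inductive FlatClosure (Ψ : WeightClass) (D : Type) [SmallCategory D] :
    (Dᵒᵖ ⥤ Type) → Prop
  | base {F : Dᵒᵖ ⥤ Type} : PsiCocompletion Ψ D F → FlatClosure Ψ D F
  | iso {F G : Dᵒᵖ ⥤ Type} : FlatClosure Ψ D F → Nonempty (F ≅ G) → FlatClosure Ψ D G
  | wcolim (W : Weight) (hW : IsFlat Ψ W.w) (H : W.D ⥤ Dᵒᵖ ⥤ Type)
      (hH : ∀ j : W.D, FlatClosure Ψ D (H.obj j)) :
      FlatClosure Ψ D (pointwiseWColim W.w H)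

/-- The saturation `Ψ*` of a class of weights `Ψ`: all weights `φ : Eᵒᵖ ⥤ Set`
that lie in the free `Ψ`-cocompletion `Ψ(E)`. -/
def saturation (Ψ : WeightClass) : WeightClass :=
  fun W => PsiCocompletion Ψ W.D W.w

section ConicalColimit

variable {J T : Type} [SmallCategory J] [SmallCategory T]

noncomputable def pointwiseWColimIsoColimit (γ : Jᵒᵖ ⥤ Type) (H : J ⥤ T ⥤ Type) :
    pointwiseWColim γ H ≅ colimit (elProj γ ⋙ H) :=
  (colimitIsoFlipCompColim (elProj γ ⋙ H)).symm

noncomputable def colimitElProjYonedaIso (γ : Jᵒᵖ ⥤ Type) : colimit (elProj γ ⋙ yoneda) ≅ γ :=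
  HasColimit.isoOfNatIso (Functor.isoWhiskerLeft (elProj γ) uliftYonedaIsoYoneda.{0}.symm) ≪≫
    colimit.isoColimitCocone ⟨_, Presheaf.colimitOfRepresentable.{0} γ⟩

noncomputable def pointwiseWColimYonedaIso (γ : Jᵒᵖ ⥤ Type) : pointwiseWColim γ yoneda ≅ γ :=
  pointwiseWColimIsoColimit γ yoneda ≪≫ colimitElProjYonedaIso γ

noncomputable def pointwiseWColimIsoOfCocontinuous (L : (Jᵒᵖ ⥤ Type) ⥤ T ⥤ Type)
    [PreservesColimitsOfSize.{0, 0} L] {H : J ⥤ T ⥤ Type} (e : yoneda ⋙ L ≅ H)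
    (γ : Jᵒᵖ ⥤ Type) : pointwiseWColim γ H ≅ L.obj γ :=
  pointwiseWColimIsoColimit γ H ≪≫ HasColimit.isoOfNatIso (Functor.isoWhiskerLeft _ e.symm) ≪≫
    (preservesColimitIso L (elProj γ ⋙ yoneda)).symm ≪≫ L.mapIso (colimitElProjYonedaIso γ)

noncomputable def mapPointwiseWColimIso {S : Type} [SmallCategory S]
    (L : (Sᵒᵖ ⥤ Type) ⥤ T ⥤ Type) [PreservesColimitsOfSize.{0, 0} L] (γ : Jᵒᵖ ⥤ Type)
    (K : J ⥤ Sᵒᵖ ⥤ Type) : L.obj (pointwiseWColim γ K) ≅ pointwiseWColim γ (K ⋙ L) :=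
  L.mapIso (pointwiseWColimIsoColimit γ K) ≪≫ preservesColimitIso L (elProj γ ⋙ K) ≪≫
    (pointwiseWColimIsoColimit γ (K ⋙ L)).symm

-- Mathlib extends along `uliftYoneda`, which at level `0` is `yoneda` up to `ULift`.
noncomputable abbrev yonedaExtension (H : J ⥤ T ⥤ Type) : (Jᵒᵖ ⥤ Type) ⥤ T ⥤ Type :=
  uliftYoneda.{0}.leftKanExtension H

noncomputable def yonedaExtensionCompIso (H : J ⥤ T ⥤ Type) :
    yoneda ⋙ yonedaExtension H ≅ H :=
  Functor.isoWhiskerRight uliftYonedaIsoYoneda.{0}.symm _ ≪≫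
    Presheaf.isExtensionAlongULiftYoneda H

end ConicalColimit

section Closure

variable {Ψ : WeightClass}

theorem PsiCocompletion.obj_of_preservesColimits {S D : Type} [SmallCategory S]
    [SmallCategory D] (L : (Sᵒᵖ ⥤ Type) ⥤ Dᵒᵖ ⥤ Type) [PreservesColimitsOfSize.{0, 0} L]
    (hL : ∀ s, PsiCocompletion Ψ D (L.obj (yoneda.obj s))) {ψ : Sᵒᵖ ⥤ Type}
    (hψ : PsiCocompletion Ψ S ψ) : PsiCocompletion Ψ D (L.obj ψ) := by
  induction hψ with
  | rep s => exact hL s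
  | iso _ i ih => exact .iso ih ⟨L.mapIso i.some⟩
  | wcolim W hW K _ ih =>
    exact .iso (.wcolim W hW (K ⋙ L) ih) ⟨(mapPointwiseWColimIso L W.w K).symm⟩

theorem PsiCocompletion.pointwiseWColim {S D : Type} [SmallCategory S] [SmallCategory D]
    {ψ : Sᵒᵖ ⥤ Type} (hψ : PsiCocompletion Ψ S ψ) (H : S ⥤ Dᵒᵖ ⥤ Type)
    (hH : ∀ s, PsiCocompletion Ψ D (H.obj s)) : PsiCocompletion Ψ D (pointwiseWColim ψ H) :=
  .iso (obj_of_preservesColimits (yonedaExtension H)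
      (fun s => .iso (hH s) ⟨((yonedaExtensionCompIso H).app s).symm⟩) hψ)
    ⟨(pointwiseWColimIsoOfCocontinuous _ (yonedaExtensionCompIso H) ψ).symm⟩

theorem PsiCocompletion.of_saturation {D : Type} [SmallCategory D] {F : Dᵒᵖ ⥤ Type}
    (hF : PsiCocompletion (saturation Ψ) D F) : PsiCocompletion Ψ D F := by
  induction hF with
  | rep d => exact .rep d
  | iso _ i ih => exact .iso ih i
  | wcolim W hW H _ ih => exact hW.pointwiseWColim H ih

theorem IsLocallySmall.saturation (hls : IsLocallySmall Ψ) : IsLocallySmall (saturation Ψ) := by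
  intro D _
  obtain ⟨ι, f, hf⟩ := hls D
  exact ⟨ι, f, fun F hF => hf F hF.of_saturation⟩

theorem saturation_of_mem {W : Weight} (hW : Ψ W) : saturation Ψ W :=
  .iso (.wcolim W hW yoneda .rep) ⟨pointwiseWColimYonedaIso W.w⟩

end Closure

section UniversalProperty

variable {J T : Type} [SmallCategory J] [SmallCategory T]

def homPresheaf (H : J ⥤ T ⥤ Type) (M : T ⥤ Type) : Jᵒᵖ ⥤ Type :=
  H.op ⋙ yoneda.obj M

namespace pointwiseWColim

variable (γ : Jᵒᵖ ⥤ Type) (H : J ⥤ T ⥤ Type)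

noncomputable def ι (j : J) (x : γ.obj (op j)) : H.obj j ⟶ pointwiseWColim γ H where
  app t := (colimit.ι (elProj γ ⋙ H.flip.obj t) (op (γ.elementsMk (op j) x)) :)
  naturality _ _ f :=
    (colimit.ι_map (Functor.whiskerLeft (elProj γ) (H.flip.map f)) _).symm

lemma w {j j' : J} (u : j ⟶ j') (x : γ.obj (op j')) :
    H.map u ≫ ι γ H j' x = ι γ H j (γ.map u.op x) := by
  ext t : 2
  exact (colimit.w (elProj γ ⋙ H.flip.obj t)
    (CategoryOfElements.homMk (γ.elementsMk (op j') x) (γ.elementsMk (op j) (γ.map u.op x))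
      u.op rfl).op :)

variable {γ H} in
noncomputable def desc {M : T ⥤ Type} (α : γ ⟶ homPresheaf H M) :
    pointwiseWColim γ H ⟶ M where
  app t := (colimit.desc (elProj γ ⋙ H.flip.obj t)
    { pt := M.obj t
      ι :=
        { app := fun c => (α.app c.unop.1 c.unop.2).app t
          naturality := fun c c' m => by
            have hα : α.app c.unop.1 c.unop.2
                = H.map m.unop.1.unop ≫ α.app c'.unop.1 c'.unop.2 := by
              conv_lhs => rw [← m.unop.2]
              exact ConcreteCategory.congr_hom (α.naturality m.unop.1) c'.unop.2
            ext z
            change (α.app c'.unop.1 c'.unop.2).app t ((H.map m.unop.1.unop).app t z)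
                = (α.app c.unop.1 c.unop.2).app t z
            rw [hα]
            rfl } } :)
  naturality t t' f := by
    dsimp only [pointwiseWColim, wColim, Functor.comp_obj, Functor.comp_map,
      Functor.whiskeringLeft_obj_obj, Functor.whiskeringLeft_obj_map, colim_obj, colim_map]
    apply colimit.hom_ext
    intro c
    rw [← Category.assoc, ι_colimMap, Category.assoc, colimit.ι_desc, ← Category.assoc,
      colimit.ι_desc]
    exact (α.app c.unop.1 c.unop.2).naturality f

lemma ι_desc {M : T ⥤ Type} (α : γ ⟶ homPresheaf H M) (j : J) (x : γ.obj (op j)) :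
    ι γ H j x ≫ desc α = α.app (op j) x := by
  ext t : 2
  exact colimit.ι_desc _ _

lemma jointly_surjective (t : T) (w : (pointwiseWColim γ H).obj t) :
    ∃ (j : J) (x : γ.obj (op j)) (k : (H.obj j).obj t), (ι γ H j x).app t k = w := by
  obtain ⟨⟨⟨j⟩, x⟩, k, hk⟩ :=
    Types.jointly_surjective' (F := elProj γ ⋙ H.flip.obj t) (show colimit _ from w)
  exact ⟨j, x, k, hk⟩

variable {γ H} in
lemma hom_ext {M : T ⥤ Type} {f g : pointwiseWColim γ H ⟶ M}
    (h : ∀ (j : J) (x : γ.obj (op j)), ι γ H j x ≫ f = ι γ H j x ≫ g) : f = g := by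
  ext t w
  obtain ⟨j, x, k, rfl⟩ := jointly_surjective γ H t w
  exact ConcreteCategory.congr_hom (NatTrans.congr_app (h j x) t) k

variable {γ H} in
noncomputable def restrict {M : T ⥤ Type} (f : pointwiseWColim γ H ⟶ M) :
    γ ⟶ homPresheaf H M where
  app j := TypeCat.ofHom fun x => ι γ H j.unop x ≫ f
  naturality j j' u := by
    ext x
    change ι γ H j'.unop (γ.map u x) ≫ f = H.map u.unop ≫ ι γ H j.unop x ≫ f
    rw [← Category.assoc, w γ H u.unop x]
    rfl

noncomputable def descEquiv (M : T ⥤ Type) :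
    (γ ⟶ homPresheaf H M) ≃ (pointwiseWColim γ H ⟶ M) where
  toFun := desc
  invFun := restrict
  left_inv α := by
    ext j x
    exact ι_desc γ H α j.unop x
  right_inv f := hom_ext fun j x => ι_desc γ H (restrict f) j x

end pointwiseWColim

end UniversalProperty

section WeightedLimitComparison

variable {J D E : Type} [SmallCategory J] [SmallCategory D] [SmallCategory E]

def wLimPrecomp {ψ ψ' : Dᵒᵖ ⥤ Type} (i : ψ ⟶ ψ') (G : Dᵒᵖ ⥤ E ⥤ Type) :
    wLim ψ' G ⟶ wLim ψ G where
  app e := TypeCat.ofHom fun α => i ≫ α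
  naturality e e' f := by
    ext (α : _ ⟶ G.flip.obj e)
    exact (Category.assoc i α (G.flip.map f)).symm

lemma wLimPrecomp_id (ψ : Dᵒᵖ ⥤ Type) (G : Dᵒᵖ ⥤ E ⥤ Type) :
    wLimPrecomp (𝟙 ψ) G = 𝟙 (wLim ψ G) := by
  ext e (α : _ ⟶ G.flip.obj e)
  exact Category.id_comp α

lemma wLimPrecomp_comp {ψ ψ' ψ'' : Dᵒᵖ ⥤ Type} (i : ψ ⟶ ψ') (i' : ψ' ⟶ ψ'')
    (G : Dᵒᵖ ⥤ E ⥤ Type) : wLimPrecomp (i ≫ i') G = wLimPrecomp i' G ≫ wLimPrecomp i G := by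
  ext e (α : _ ⟶ G.flip.obj e)
  exact Category.assoc i i' α

def wLimPrecompIso {ψ ψ' : Dᵒᵖ ⥤ Type} (i : ψ ≅ ψ') (G : Dᵒᵖ ⥤ E ⥤ Type) :
    wLim ψ' G ≅ wLim ψ G where
  hom := wLimPrecomp i.hom G
  inv := wLimPrecomp i.inv G
  hom_inv_id := by rw [← wLimPrecomp_comp, i.inv_hom_id, wLimPrecomp_id]
  inv_hom_id := by rw [← wLimPrecomp_comp, i.hom_inv_id, wLimPrecomp_id]

lemma wLimComparison_map_wLimPrecomp (H : (E ⥤ Type) ⥤ Type) {ψ ψ' : Dᵒᵖ ⥤ Type}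
    (i : ψ ⟶ ψ') (G : Dᵒᵖ ⥤ E ⥤ Type) (z : H.obj (wLim ψ' G)) :
    wLimComparison H ψ G (H.map (wLimPrecomp i G) z) = i ≫ wLimComparison H ψ' G z := by
  ext d y
  exact (Functor.map_comp_apply H _ _ z).symm

theorem bijective_wLimComparison_of_iso (H : (E ⥤ Type) ⥤ Type) {ψ ψ' : Dᵒᵖ ⥤ Type}
    (i : ψ ≅ ψ') (G : Dᵒᵖ ⥤ E ⥤ Type) (h : Function.Bijective (wLimComparison H ψ G)) :
    Function.Bijective (wLimComparison H ψ' G) := by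
  have hsq : wLimComparison H ψ' G ∘ H.map (wLimPrecomp i.inv G)
      = i.homFromEquiv ∘ wLimComparison H ψ G :=
    funext (wLimComparison_map_wLimPrecomp H i.inv G)
  rw [← Function.Bijective.of_comp_iff _ (H.mapIso (wLimPrecompIso i.symm G)).toEquiv.bijective]
  exact hsq ▸ i.homFromEquiv.bijective.comp h

lemma wLimEval_yoneda_comp_map (G : Dᵒᵖ ⥤ E ⥤ Type) (d : D) {d' : Dᵒᵖ} (u : d'.unop ⟶ d) :
    wLimEval (yoneda.obj d) G (op d) (𝟙 d) ≫ G.map u.op = wLimEval (yoneda.obj d) G d' u := by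
  ext e (α : _ ⟶ G.flip.obj e)
  change _ = α.app d' u
  conv_rhs => rw [← Category.comp_id u]
  exact (ConcreteCategory.congr_hom (α.naturality u.op) (𝟙 d)).symm

def wLimYonedaIso (G : Dᵒᵖ ⥤ E ⥤ Type) (d : D) : wLim (yoneda.obj d) G ≅ G.obj (op d) where
  hom := wLimEval (yoneda.obj d) G (op d) (𝟙 d)
  inv :=
    { app e := TypeCat.ofHom fun g =>
        { app d' := TypeCat.ofHom fun (u : d'.unop ⟶ d) => (G.map u.op).app e g
          naturality d' d'' m := by
            ext u
            change (G.map (u.op ≫ m)).app e g = (G.map m).app e ((G.map u.op).app e g)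
            rw [G.map_comp]
            rfl }
      naturality e e' f := by
        ext g
        apply NatTrans.ext
        funext d'
        ext u
        exact ConcreteCategory.congr_hom ((G.map u.op).naturality f) g }
  hom_inv_id := by
    ext e α
    apply NatTrans.ext
    funext d'
    ext u
    exact ConcreteCategory.congr_hom (NatTrans.congr_app (wLimEval_yoneda_comp_map G d u) e) α
  inv_hom_id := by
    ext e g
    exact ConcreteCategory.congr_hom (NatTrans.congr_app (G.map_id (op d)) e) g

theorem bijective_wLimComparison_yoneda (H : (E ⥤ Type) ⥤ Type) (G : Dᵒᵖ ⥤ E ⥤ Type) (d : D) :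
    Function.Bijective (wLimComparison H (yoneda.obj d) G) := by
  have hfac : wLimComparison H (yoneda.obj d) G
      = yonedaEquiv.symm ∘ (H.mapIso (wLimYonedaIso G d)).toEquiv := by
    ext z d' u
    change H.map (wLimEval (yoneda.obj d) G d' u) z
      = H.map (G.map u.op) (H.map (wLimEval (yoneda.obj d) G (op d) (𝟙 d)) z)
    rw [← wLimEval_yoneda_comp_map G d u, Functor.map_comp_apply]
  rw [hfac]
  exact yonedaEquiv.symm.bijective.comp (H.mapIso (wLimYonedaIso G d)).toEquiv.bijective

def wLimDiagram (K : J ⥤ Dᵒᵖ ⥤ Type) (G : Dᵒᵖ ⥤ E ⥤ Type) : Jᵒᵖ ⥤ E ⥤ Type where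
  obj j := wLim (K.obj j.unop) G
  map u := wLimPrecomp (K.map u.unop) G
  map_id j := by rw [unop_id, K.map_id, wLimPrecomp_id]
  map_comp u v := by rw [unop_comp, K.map_comp, wLimPrecomp_comp]

open pointwiseWColim in
noncomputable def wLimPointwiseWColimIso (γ : Jᵒᵖ ⥤ Type) (K : J ⥤ Dᵒᵖ ⥤ Type)
    (G : Dᵒᵖ ⥤ E ⥤ Type) : wLim (pointwiseWColim γ K) G ≅ wLim γ (wLimDiagram K G) where
  hom :=
    { app e := TypeCat.ofHom restrict
      naturality e e' f := by
        ext (β : _ ⟶ G.flip.obj e)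
        apply NatTrans.ext
        funext j
        ext x
        exact (Category.assoc (ι γ K j.unop x) β (G.flip.map f)).symm }
  inv :=
    { app e := TypeCat.ofHom desc
      naturality e e' f := by
        ext (α : _ ⟶ (wLimDiagram K G).flip.obj e)
        change desc (α ≫ (wLimDiagram K G).flip.map f) = desc α ≫ G.flip.map f
        refine hom_ext fun j x => ?_
        rw [ι_desc, ← Category.assoc]
        exact (congrArg (· ≫ G.flip.map f) (ι_desc γ K α j x)).symm }
  hom_inv_id := by
    ext e β
    exact (descEquiv γ K _).right_inv β
  inv_hom_id := by
    ext e α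
    exact (descEquiv γ K _).left_inv α

lemma wLimPointwiseWColimIso_inv_comp_wLimPrecomp_ι (γ : Jᵒᵖ ⥤ Type) (K : J ⥤ Dᵒᵖ ⥤ Type)
    (G : Dᵒᵖ ⥤ E ⥤ Type) (j : J) (x : γ.obj (op j)) :
    (wLimPointwiseWColimIso γ K G).inv ≫ wLimPrecomp (pointwiseWColim.ι γ K j x) G
      = wLimEval γ (wLimDiagram K G) (op j) x := by
  ext e α
  exact pointwiseWColim.ι_desc γ K α j x

noncomputable def wLimDiagramCompIso (H : (E ⥤ Type) ⥤ Type) (K : J ⥤ Dᵒᵖ ⥤ Type)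
    (G : Dᵒᵖ ⥤ E ⥤ Type) (hK : ∀ j, Function.Bijective (wLimComparison H (K.obj j) G)) :
    wLimDiagram K G ⋙ H ≅ homPresheaf K (G ⋙ H) :=
  NatIso.ofComponents (fun j => (Equiv.ofBijective _ (hK j.unop)).toIso) fun u => by
    ext z
    exact wLimComparison_map_wLimPrecomp H (K.map u.unop) G z

theorem bijective_wLimComparison_pointwiseWColim (H : (E ⥤ Type) ⥤ Type) (γ : Jᵒᵖ ⥤ Type)
    (K : J ⥤ Dᵒᵖ ⥤ Type) (G : Dᵒᵖ ⥤ E ⥤ Type)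
    (hγ : Function.Bijective (wLimComparison H γ (wLimDiagram K G)))
    (hK : ∀ j, Function.Bijective (wLimComparison H (K.obj j) G)) :
    Function.Bijective (wLimComparison H (pointwiseWColim γ K) G) := by
  set θ := wLimDiagramCompIso H K G hK
  set e := wLimPointwiseWColimIso γ K G
  have hsq : wLimComparison H (pointwiseWColim γ K) G ∘ (H.mapIso e.symm).toEquiv
      = pointwiseWColim.descEquiv γ K _ ∘ θ.homToEquiv ∘ wLimComparison H γ (wLimDiagram K G) := by
    funext z
    refine pointwiseWColim.hom_ext fun j x => ?_
    change pointwiseWColim.ι γ K j x ≫ wLimComparison H _ G (H.map e.inv z) = _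
    rw [← wLimComparison_map_wLimPrecomp, ← Functor.map_comp_apply,
      wLimPointwiseWColimIso_inv_comp_wLimPrecomp_ι]
    exact (pointwiseWColim.ι_desc γ K (wLimComparison H γ _ z ≫ θ.hom) j x).symm
  rw [← Function.Bijective.of_comp_iff _ (H.mapIso e.symm).toEquiv.bijective, hsq]
  exact (pointwiseWColim.descEquiv γ K _).bijective.comp (θ.homToEquiv.bijective.comp hγ)

end WeightedLimitComparison

section Soundness

variable {Ψ : WeightClass}

theorem bijective_wLimComparison_of_psiCocompletion {E : Type}
    [SmallCategory E] (H : (E ⥤ Type) ⥤ Type)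
    (hH : ∀ W : Weight, Ψ W → ∀ G : W.Dᵒᵖ ⥤ E ⥤ Type,
      Function.Bijective (wLimComparison H W.w G))
    {D : Type} [SmallCategory D] {ψ : Dᵒᵖ ⥤ Type} (hψ : PsiCocompletion Ψ D ψ)
    (G : Dᵒᵖ ⥤ E ⥤ Type) : Function.Bijective (wLimComparison H ψ G) := by
  induction hψ generalizing G with
  | rep d => exact bijective_wLimComparison_yoneda H G d
  | iso _ i ih => exact bijective_wLimComparison_of_iso H i.some G (ih G)
  | wcolim W hW K _ ih =>
    exact bijective_wLimComparison_pointwiseWColim H W.w K G (hH W hW _) fun j => ih j G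

theorem IsSound.saturation (hs : IsSound Ψ) : IsSound (saturation Ψ) :=
  fun E _ φ hφ _ hW G =>
    bijective_wLimComparison_of_psiCocompletion (wColim φ)
      (hs E φ fun W' hW' T => hφ W' (saturation_of_mem hW') T) hW G

end Soundness

/-- If `Ψ` is locally small and sound, then so is its
saturation `Ψ*`. -/
theorem saturation_locallySmall_sound (Ψ : WeightClass)
    (hls : IsLocallySmall Ψ) (hs : IsSound Ψ) :
    IsLocallySmall (saturation Ψ) ∧ IsSound (saturation Ψ) :=
  ⟨hls.saturation, hs.saturation⟩

end Paper
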